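/- Let G be a closed subgroup of O(N) and let V := {x ∈ ℝ^N : the G-orbit of x is finite}. Then V is a G-invariant linear subspace of ℝ^N. -/

import Mathlib

open MulAction

section FiniteOrbit

variable (R M E : Type*) [Semiring R] [AddCommMonoid E] [Module R E] [Monoid M]
  [DistribMulAction M E]

def finiteOrbitSubmodule [SMulCommClass M R E] : Submodule R E where
  carrier := {x | (orbit M x).Finite}
  zero_mem' := (Set.finite_singleton (0 : E)).subset <| by
    rintro _ ⟨m, rfl⟩
    exact smul_zero m
  add_mem' {a b} ha hb := (ha.image2 (· + ·) hb).subset <| by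
    rintro _ ⟨m, rfl⟩
    exact ⟨m • a, mem_orbit a m, m • b, mem_orbit b m, (smul_add m a b).symm⟩
  smul_mem' c x hx := (hx.image (c • ·)).subset <| by
    rintro _ ⟨m, rfl⟩
    exact ⟨m • x, mem_orbit x m, (smul_comm m c x).symm⟩

variable {R M E} [SMulCommClass M R E]

theorem mem_finiteOrbitSubmodule {x : E} :
    x ∈ finiteOrbitSubmodule R M E ↔ (orbit M x).Finite :=
  Iff.rfl

theorem smul_mem_finiteOrbitSubmodule (m : M) {x : E} (hx : x ∈ finiteOrbitSubmodule R M E) :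
    m • x ∈ finiteOrbitSubmodule R M E :=
  hx.subset (orbit_smul_subset m x)

end FiniteOrbit

namespace LinearIsometryEquiv

variable {R E : Type*} [Semiring R] [SeminormedAddCommGroup E] [Module R E]

instance applyDistribMulAction : DistribMulAction (E ≃ₗᵢ[R] E) E where
  smul g x := g x
  one_smul _ := rfl
  mul_smul _ _ _ := rfl
  smul_zero g := map_zero g
  smul_add g := map_add g

theorem smul_def (g : E ≃ₗᵢ[R] E) (x : E) : g • x = g x :=
  rfl

instance applySMulCommClass : SMulCommClass (E ≃ₗᵢ[R] E) R E :=
  ⟨fun g c x => _root_.map_smul g c x⟩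

theorem orbit_subgroup (G : Subgroup (E ≃ₗᵢ[R] E)) (x : E) :
    orbit G x = {y | ∃ g ∈ G, g x = y} := by
  ext y
  simp [mem_orbit_iff, smul_def]

end LinearIsometryEquiv

/-- The set of points of `ℝ^N` with finite `G`-orbit, for `G` a subgroup of the
group of linear isometries of `ℝ^N`, is a `G`-invariant linear subspace. -/
theorem stmt_4 (N : ℕ)
    (G : Subgroup (EuclideanSpace ℝ (Fin N) ≃ₗᵢ[ℝ] EuclideanSpace ℝ (Fin N))) :
    ∃ V : Submodule ℝ (EuclideanSpace ℝ (Fin N)),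
      (V : Set (EuclideanSpace ℝ (Fin N))) =
        {x | {y | ∃ g ∈ G, g x = y}.Finite} ∧
      ∀ g ∈ G, ∀ x ∈ V, g x ∈ V :=
  ⟨finiteOrbitSubmodule ℝ G _,
    by
      ext x
      simp only [SetLike.mem_coe, mem_finiteOrbitSubmodule, LinearIsometryEquiv.orbit_subgroup,
        Set.mem_ofPred_eq],
    fun g hg _ hx => smul_mem_finiteOrbitSubmodule (⟨g, hg⟩ : G) hx⟩
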